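/- The piecewise function φ(ξ) = 1 - (1/2)exp(-(ξ-ξ*)/√(1-c²)) for ξ > ξ* and φ(ξ) = (1/2)exp((ξ-ξ*)/√(1-c²)) for ξ ≤ ξ* satisfies (c²-1)φ''(ξ) = -φ(ξ) + h(ξ - ξ*) for all ξ ≠ ξ*, where h is the Heaviside step function. -/
import Mathlib

lemma hd_exp_neg (a s x : ℝ) :
    HasDerivAt (fun x => Real.exp (-(x - a) / s)) (Real.exp (-(x - a) / s) * (-1 / s)) x := by
  have h1 : HasDerivAt (fun x => -(x - a) / s) (-1 / s) x :=
    (((hasDerivAt_id x).sub_const a).neg).div_const s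
  exact h1.exp

lemma hd_exp_pos (a s x : ℝ) :
    HasDerivAt (fun x => Real.exp ((x - a) / s)) (Real.exp ((x - a) / s) * (1 / s)) x := by
  have h1 : HasDerivAt (fun x => (x - a) / s) (1 / s) x :=
    ((hasDerivAt_id x).sub_const a).div_const s
  exact h1.exp

theorem mckean_heteroclinic_solves
    (c ξstar : ℝ) (hc : |c| < 1)
    (h φ : ℝ → ℝ)
    (hh : ∀ x : ℝ, h x = if 0 < x then 1 else 0)
    (hφ : ∀ ξ : ℝ, φ ξ =
      if ξstar < ξ then 1 - (1 / 2) * Real.exp (-(ξ - ξstar) / Real.sqrt (1 - c ^ 2))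
      else (1 / 2) * Real.exp ((ξ - ξstar) / Real.sqrt (1 - c ^ 2))) :
    ∀ ξ : ℝ, ξ ≠ ξstar →
      (c ^ 2 - 1) * deriv (deriv φ) ξ = -φ ξ + h (ξ - ξstar) := by
  set s := Real.sqrt (1 - c ^ 2) with hsdef
  have hc2 : c ^ 2 < 1 := by
    nlinarith [sq_abs c, abs_nonneg c]
  have hs : 0 < s := Real.sqrt_pos.mpr (by linarith)
  have hs2 : s ^ 2 = 1 - c ^ 2 := Real.sq_sqrt (by linarith)
  have hsne : s ≠ 0 := ne_of_gt hs
  intro ξ hξ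
  rcases lt_or_gt_of_ne hξ with hlt | hgt
  · -- ξ < ξstar
    have hev : φ =ᶠ[nhds ξ] fun x => (1 / 2) * Real.exp ((x - ξstar) / s) := by
      filter_upwards [Iio_mem_nhds hlt] with x hx
      rw [hφ x, if_neg (not_lt.mpr (le_of_lt hx))]
    have hderiv : deriv φ =ᶠ[nhds ξ] fun x => (1 / (2 * s)) * Real.exp ((x - ξstar) / s) := by
      have := hev.deriv
      refine this.trans ?_
      filter_upwards with x
      have : HasDerivAt (fun x => (1 / 2) * Real.exp ((x - ξstar) / s))
          ((1 / 2) * (Real.exp ((x - ξstar) / s) * (1 / s))) x :=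
        (hd_exp_pos ξstar s x).const_mul (1 / 2)
      rw [this.deriv]; field_simp
    have h2 : deriv (deriv φ) ξ = (1 / (2 * s)) * (Real.exp ((ξ - ξstar) / s) * (1 / s)) := by
      rw [hderiv.deriv_eq]
      exact ((hd_exp_pos ξstar s ξ).const_mul (1 / (2 * s))).deriv
    rw [h2, hφ ξ, if_neg (not_lt.mpr (le_of_lt hlt)), hh, if_neg (by linarith)]
    have hcs : c ^ 2 - 1 = -(s * s) := by nlinarith
    rw [hcs]
    field_simp
    ring
  · -- ξ > ξstar
    have hev : φ =ᶠ[nhds ξ] fun x => 1 - (1 / 2) * Real.exp (-(x - ξstar) / s) := by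
      filter_upwards [Ioi_mem_nhds hgt] with x hx
      rw [hφ x, if_pos (Set.mem_Ioi.mp hx)]
    have hderiv : deriv φ =ᶠ[nhds ξ] fun x => (1 / (2 * s)) * Real.exp (-(x - ξstar) / s) := by
      have := hev.deriv
      refine this.trans ?_
      filter_upwards with x
      have : HasDerivAt (fun x => 1 - (1 / 2) * Real.exp (-(x - ξstar) / s))
          (-((1 / 2) * (Real.exp (-(x - ξstar) / s) * (-1 / s)))) x :=
        ((hd_exp_neg ξstar s x).const_mul (1 / 2)).const_sub 1
      rw [this.deriv]; field_simp
    have h2 : deriv (deriv φ) ξ = (1 / (2 * s)) * (Real.exp (-(ξ - ξstar) / s) * (-1 / s)) := by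
      rw [hderiv.deriv_eq]
      exact ((hd_exp_neg ξstar s ξ).const_mul (1 / (2 * s))).deriv
    rw [h2, hφ ξ, if_pos hgt, hh, if_pos (by linarith)]
    have hcs : c ^ 2 - 1 = -(s * s) := by nlinarith
    rw [hcs]
    field_simp
    ring
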